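/- arXiv:1606.05578 — 5 statements merged into one kernel-verified Lean document; each statement's English description precedes it below -/
import Mathlib

section
/- Let H be a real inner product space (e.g. EuclideanSpace ℝ (Fin n)) which is complete, let X ⊆ H be a nonempty closed convex set and P_X the orthogonal projection onto X. Let u ∈ H, g ∈ H, ε > 0, and set u' = P_X(u − ε g). Then for every x ∈ X: ⟨g, u − x⟩ ≤ (1/(2ε)) (‖u − x‖² − ‖u' − x‖²) + (ε/2) ‖g‖². -/
open scoped InnerProductSpace

/-- The projected-gradient inequality from the proof of Lemma 2 of the paper:
with `P` the orthogonal (metric) projection onto the nonempty closed convex set `X`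
and `u' = P (u - ε g)`, for every `x ∈ X`,
`⟪g, u - x⟫ ≤ (1/(2ε)) (‖u - x‖² - ‖u' - x‖²) + (ε/2) ‖g‖²`. -/
theorem stmt2 {H : Type*} [NormedAddCommGroup H] [InnerProductSpace ℝ H]
    [CompleteSpace H]
    (X : Set H) (hXne : X.Nonempty) (hXcl : IsClosed X) (hXconv : Convex ℝ X)
    (P : H → H) (hP : ∀ y : H, P y ∈ X ∧ ∀ w ∈ X, ‖y - P y‖ ≤ ‖y - w‖)
    (u g : H) (ε : ℝ) (hε : 0 < ε) (u' : H) (hu' : u' = P (u - ε • g)) :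
    ∀ x ∈ X, ⟪g, u - x⟫_ℝ ≤
      (1 / (2 * ε)) * (‖u - x‖ ^ 2 - ‖u' - x‖ ^ 2) + (ε / 2) * ‖g‖ ^ 2 := by
  intro x hx
  set y : H := u - ε • g with hy
  have hu'X : u' ∈ X := hu' ▸ (hP y).1
  have hne : Nonempty X := ⟨⟨u', hu'X⟩⟩
  have hinf : ‖y - u'‖ = ⨅ w : X, ‖y - w‖ := by
    refine le_antisymm (le_ciInf fun w => ?_) (ciInf_le ⟨0, ?_⟩ (⟨u', hu'X⟩ : X))
    · rw [hu']; exact (hP y).2 w w.2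
    · rintro r ⟨w, rfl⟩; exact norm_nonneg _
  have hobt : ∀ w ∈ X, ⟪y - u', w - u'⟫_ℝ ≤ 0 :=
    (norm_eq_iInf_iff_real_inner_le_zero hXconv hu'X).mp hinf
  have h1 : ⟪y - u', x - u'⟫_ℝ ≤ 0 := hobt x hx
  -- ‖u' - x‖² ≤ ‖y - x‖²
  have key : ‖u' - x‖ ^ 2 ≤ ‖y - x‖ ^ 2 := by
    have expand : ‖y - x‖ ^ 2 = ‖y - u'‖ ^ 2 + 2 * ⟪y - u', u' - x⟫_ℝ + ‖u' - x‖ ^ 2 := by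
      have : y - x = (y - u') + (u' - x) := by abel
      rw [this, norm_add_sq_real]
    have h2 : ⟪y - u', u' - x⟫_ℝ = -⟪y - u', x - u'⟫_ℝ := by
      rw [← inner_neg_right]; congr 1; abel
    nlinarith [sq_nonneg ‖y - u'‖]
  have expand2 : ‖y - x‖ ^ 2 = ‖u - x‖ ^ 2 - 2 * ε * ⟪g, u - x⟫_ℝ + ε ^ 2 * ‖g‖ ^ 2 := by
    have : y - x = (u - x) - ε • g := by rw [hy]; abel
    rw [this, norm_sub_sq_real, norm_smul, real_inner_smul_right, real_inner_comm]
    simp [abs_of_pos hε]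
    ring
  have hε' : 0 < 2 * ε := by linarith
  have final : ⟪g, u - x⟫_ℝ - ε / 2 * ‖g‖ ^ 2 ≤ (‖u - x‖ ^ 2 - ‖u' - x‖ ^ 2) / (2 * ε) := by
    rw [le_div_iff₀ hε']; nlinarith [key, expand2]
  have heq : (1 / (2 * ε)) * (‖u - x‖ ^ 2 - ‖u' - x‖ ^ 2)
      = (‖u - x‖ ^ 2 - ‖u' - x‖ ^ 2) / (2 * ε) := by ring
  linarith [final, heq.ge, heq.le]
end

section
/- Let H be a complete real inner product space, X ⊆ H a nonempty closed convex set with orthogonal projection P_X, and φ : H → ℝ a convex differentiable function. Let u ∈ H, ε > 0, and set u' = P_X(u − ε ∇φ(u)). Then for every x ∈ X: φ(u) − φ(x) ≤ (1/(2ε)) (‖u − x‖² − ‖u' − x‖²) + (ε/2) ‖∇φ(u)‖². -/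
/-!
Convexity gives `φ u - φ x ≤ ⟪∇φ u, u - x⟫`, and expanding `‖(u - ε ∇φ u) - x‖²` rewrites the
right-hand side as `(‖u - x‖² - ‖(u - ε ∇φ u) - x‖²) / (2ε) + (ε/2) ‖∇φ u‖²`. Projecting
`u - ε ∇φ u` onto `X` does not increase its distance to the point `x ∈ X`, because the projection
satisfies the obtuse-angle criterion.
-/

open InnerProductSpace

theorem ConvexOn.hasFDerivAt_le_sub {E : Type*} [NormedAddCommGroup E] [NormedSpace ℝ E]
    {s : Set E} {f : E → ℝ} {f' : E →L[ℝ] ℝ} {u x : E} (hf : ConvexOn ℝ s f)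
    (hu : u ∈ s) (hx : x ∈ s) (hf' : HasFDerivAt f f' u) : f' (x - u) ≤ f x - f u := by
  let ℓ : ℝ →ᵃ[ℝ] E := AffineMap.lineMap u x
  have hconv : ConvexOn ℝ (ℓ ⁻¹' s) (f ∘ ℓ) := hf.comp_affineMap ℓ
  have h0 : (0 : ℝ) ∈ ℓ ⁻¹' s := by simpa [ℓ] using hu
  have h1 : (1 : ℝ) ∈ ℓ ⁻¹' s := by simpa [ℓ] using hx
  have hderiv : HasDerivAt (f ∘ ℓ) (f' (x - u)) 0 := by
    have hf'ℓ : HasFDerivAt f f' (ℓ 0) := by simpa [ℓ] using hf'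
    exact hf'ℓ.comp_hasDerivAt 0 AffineMap.hasDerivAt_lineMap
  simpa [slope_def_field, ℓ] using hconv.le_slope_of_hasDerivAt h0 h1 one_pos hderiv

theorem ConvexOn.sub_le_inner_of_hasGradientAt {H : Type*} [NormedAddCommGroup H]
    [InnerProductSpace ℝ H] [CompleteSpace H] {s : Set H} {f : H → ℝ} {g u x : H}
    (hf : ConvexOn ℝ s f) (hu : u ∈ s) (hx : x ∈ s) (hg : HasGradientAt f g u) :
    f u - f x ≤ ⟪g, u - x⟫_ℝ := by
  have := hf.hasFDerivAt_le_sub hu hx hg.hasFDerivAt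
  rw [toDual_apply_apply, ← neg_sub u x, inner_neg_right] at this
  linarith

section

variable {F : Type*} [NormedAddCommGroup F] [InnerProductSpace ℝ F] {K : Set F} {y p x : F}

theorem Convex.real_inner_le_zero_of_isMinOn (hK : Convex ℝ K) (hp : p ∈ K)
    (hmin : IsMinOn (fun w => ‖y - w‖) K p) (hx : x ∈ K) : ⟪y - p, x - p⟫_ℝ ≤ 0 := by
  have : Nonempty K := ⟨⟨p, hp⟩⟩
  refine (norm_eq_iInf_iff_real_inner_le_zero hK hp).1 ?_ x hx
  refine le_antisymm (le_ciInf fun w => isMinOn_iff.1 hmin w w.2) ?_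
  exact ciInf_le (f := fun w : K => ‖y - w‖) ⟨0, Set.forall_mem_range.2 fun w => norm_nonneg _⟩
    ⟨p, hp⟩

theorem Convex.norm_sub_le_of_isMinOn (hK : Convex ℝ K) (hp : p ∈ K)
    (hmin : IsMinOn (fun w => ‖y - w‖) K p) (hx : x ∈ K) : ‖p - x‖ ≤ ‖y - x‖ := by
  have hobtuse := hK.real_inner_le_zero_of_isMinOn hp hmin hx
  have hexpand : ‖y - x‖ ^ 2 = ‖y - p‖ ^ 2 - 2 * ⟪y - p, x - p⟫_ℝ + ‖x - p‖ ^ 2 := by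
    rw [← norm_sub_sq_real, sub_sub_sub_cancel_right]
  rw [norm_sub_rev p x, ← sq_le_sq₀ (norm_nonneg _) (norm_nonneg _)]
  nlinarith [sq_nonneg ‖y - p‖]

theorem norm_sub_smul_sub_sq (u x g : F) (ε : ℝ) :
    ‖u - ε • g - x‖ ^ 2 = ‖u - x‖ ^ 2 - 2 * ε * ⟪g, u - x⟫_ℝ + ε ^ 2 * ‖g‖ ^ 2 := by
  rw [sub_right_comm, norm_sub_sq_real, real_inner_smul_right, real_inner_comm, norm_smul,
    Real.norm_eq_abs, mul_pow, sq_abs]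
  ring

end

theorem stmt3_general {H : Type*} [NormedAddCommGroup H] [InnerProductSpace ℝ H]
    [CompleteSpace H]
    (X : Set H) (hXconv : Convex ℝ X)
    (P : H → H) (hP : ∀ y : H, P y ∈ X ∧ ∀ w ∈ X, ‖y - P y‖ ≤ ‖y - w‖)
    (φ : H → ℝ) (hφconv : ConvexOn ℝ Set.univ φ) (hφdiff : Differentiable ℝ φ)
    (u : H) (ε : ℝ) (hε : 0 < ε) (u' : H) (hu' : u' = P (u - ε • gradient φ u)) :
    ∀ x ∈ X, φ u - φ x ≤
      (1 / (2 * ε)) * (‖u - x‖ ^ 2 - ‖u' - x‖ ^ 2) +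
        (ε / 2) * ‖gradient φ u‖ ^ 2 := by
  intro x hx
  set g := gradient φ u
  set y := u - ε • g
  have hproj : ‖u' - x‖ ≤ ‖y - x‖ :=
    hu' ▸ hXconv.norm_sub_le_of_isMinOn (hP y).1 (isMinOn_iff.2 (hP y).2) hx
  calc φ u - φ x ≤ ⟪g, u - x⟫_ℝ :=
        hφconv.sub_le_inner_of_hasGradientAt trivial trivial (hφdiff u).hasGradientAt
    _ = (1 / (2 * ε)) * (‖u - x‖ ^ 2 - ‖y - x‖ ^ 2) + (ε / 2) * ‖g‖ ^ 2 := by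
        rw [norm_sub_smul_sub_sq]; field_simp; ring
    _ ≤ (1 / (2 * ε)) * (‖u - x‖ ^ 2 - ‖u' - x‖ ^ 2) + (ε / 2) * ‖g‖ ^ 2 := by gcongr

/-- The primal descent inequality (equation (23) in the proof of Lemma 2 of the paper):
with `P` the orthogonal (metric) projection onto the nonempty closed convex set `X`,
`φ` convex differentiable, and `u' = P (u - ε ∇φ(u))`, for every `x ∈ X`,
`φ(u) - φ(x) ≤ (1/(2ε)) (‖u - x‖² - ‖u' - x‖²) + (ε/2) ‖∇φ(u)‖²`. -/
theorem stmt3 {H : Type*} [NormedAddCommGroup H] [InnerProductSpace ℝ H]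
    [CompleteSpace H]
    (X : Set H) (hXne : X.Nonempty) (hXcl : IsClosed X) (hXconv : Convex ℝ X)
    (P : H → H) (hP : ∀ y : H, P y ∈ X ∧ ∀ w ∈ X, ‖y - P y‖ ≤ ‖y - w‖)
    (φ : H → ℝ) (hφconv : ConvexOn ℝ Set.univ φ) (hφdiff : Differentiable ℝ φ)
    (u : H) (ε : ℝ) (hε : 0 < ε) (u' : H) (hu' : u' = P (u - ε • gradient φ u)) :
    ∀ x ∈ X, φ u - φ x ≤
      (1 / (2 * ε)) * (‖u - x‖ ^ 2 - ‖u' - x‖ ^ 2) +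
        (ε / 2) * ‖gradient φ u‖ ^ 2 :=
  stmt3_general X hXconv P hP φ hφconv hφdiff u ε hε u' hu'
end

section
/- Let H be a complete real inner product space, X ⊆ H a nonempty closed convex set with orthogonal projection P_X, and L : H × ℝ^M → ℝ a function such that for each fixed λ the map x ↦ L(x, λ) is convex and differentiable, and for each fixed x the map λ ↦ L(x, λ) is concave and differentiable. Let (u, μ) ∈ H × ℝ^M, ε > 0, and define the saddle point updates u' = P_X(u − ε ∇_x L(u, μ)) and μ' = [μ + ε ∇_λ L(u, μ)]₊, where [v]₊ denotes the componentwise positive part of v ∈ ℝ^M. Then for every x ∈ X and every λ ∈ ℝ^M with λ ≥ 0 componentwise: L(u, λ) − L(x, μ) ≤ (1/(2ε)) ( ‖u − x‖² − ‖u' − x‖² + ‖μ − λ‖² − ‖μ' − λ‖² ) + (ε/2) ( ‖∇_x L(u, μ)‖² + ‖∇_λ L(u, μ)‖² ). -/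
/-!
Both half-steps are projections of an explicit gradient step onto a convex set (`X`, resp. the
nonnegative orthant), and projecting onto a convex set does not increase the distance to any of
its points. Expanding `‖u - ε∇ₓL - x‖²` therefore bounds `2ε⟪∇ₓL, u - x⟫` by
`‖u - x‖² - ‖u' - x‖² + ε²‖∇ₓL‖²`, and likewise in the dual variable. The first-order conditions of
convexity in `x` and concavity in `λ` bound `L(u, λ) - L(x, μ)` by exactly these two inner products.
-/

/-- Componentwise positive part of a vector in `ℝ^M` (the orthogonal projection
onto the nonnegative orthant). -/
noncomputable def posPart5 {M : ℕ} (v : EuclideanSpace ℝ (Fin M)) :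
    EuclideanSpace ℝ (Fin M) :=
  WithLp.toLp 2 (fun i => max (v i) 0)

open InnerProductSpace

section FirstOrder

variable {E : Type*} [NormedAddCommGroup E] [NormedSpace ℝ E]
  {s : Set E} {f : E → ℝ} {f' : E →L[ℝ] ℝ} {u x : E}

/-- Restricting `f` to the segment from `u` to `x` reduces this to the one-variable
tangent-line inequality. -/
theorem ConvexOn.add_apply_sub_le_of_hasFDerivAt (hf : ConvexOn ℝ s f) (hu : u ∈ s)
    (hx : x ∈ s) (hd : HasFDerivAt f f' u) : f u + f' (x - u) ≤ f x := by
  let γ : ℝ →ᵃ[ℝ] E := AffineMap.lineMap u x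
  have hφd : HasDerivAt (f ∘ γ) (f' (x - u)) 0 :=
    (by simpa [γ] using hd : HasFDerivAt f f' (γ 0)).comp_hasDerivAt 0
      AffineMap.hasDerivAt_lineMap
  have hslope := (hf.comp_affineMap γ).le_slope_of_hasDerivAt (by simpa [γ] using hu)
    (by simpa [γ] using hx) one_pos hφd
  simp only [slope_def_field, Function.comp_apply, AffineMap.lineMap_apply_zero,
    AffineMap.lineMap_apply_one, sub_zero, div_one, γ] at hslope
  linarith

theorem ConcaveOn.le_add_apply_sub_of_hasFDerivAt (hf : ConcaveOn ℝ s f) (hu : u ∈ s)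
    (hx : x ∈ s) (hd : HasFDerivAt f f' u) : f x ≤ f u + f' (x - u) := by
  have := hf.neg.add_apply_sub_le_of_hasFDerivAt hu hx hd.neg
  simp only [Pi.neg_apply, neg_apply] at this
  linarith

end FirstOrder

section Projection

variable {F : Type*} [NormedAddCommGroup F] [InnerProductSpace ℝ F]

theorem Convex.norm_sub_sq_le_of_isNearest {K : Set F} (hK : Convex ℝ K) {y p x : F}
    (hp : p ∈ K) (hnearest : ∀ w ∈ K, ‖y - p‖ ≤ ‖y - w‖) (hx : x ∈ K) :
    ‖p - x‖ ^ 2 ≤ ‖y - x‖ ^ 2 := by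
  have : Nonempty K := ⟨⟨p, hp⟩⟩
  have hinf : ‖y - p‖ = ⨅ w : K, ‖y - w‖ :=
    le_antisymm (le_ciInf fun w => hnearest w w.2)
      (ciInf_le ⟨0, fun _ ⟨w, hw⟩ => hw ▸ norm_nonneg _⟩ (⟨p, hp⟩ : K))
  have hvar : ⟪y - p, x - p⟫_ℝ ≤ 0 :=
    (norm_eq_iInf_iff_real_inner_le_zero hK hp).1 hinf x hx
  have hsplit : ‖y - x‖ ^ 2 = ‖y - p‖ ^ 2 - 2 * ⟪y - p, x - p⟫_ℝ + ‖p - x‖ ^ 2 := by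
    rw [show y - x = (y - p) - (x - p) by abel, norm_sub_sq_real,
      show x - p = -(p - x) by abel, norm_neg]
  nlinarith [sq_nonneg ‖y - p‖]

theorem norm_add_smul_sub_sq (u d x : F) (ε : ℝ) :
    ‖u + ε • d - x‖ ^ 2 = ‖u - x‖ ^ 2 - 2 * ε * ⟪d, x - u⟫_ℝ + ε ^ 2 * ‖d‖ ^ 2 := by
  rw [show u + ε • d - x = (u - x) + ε • d by abel, norm_add_sq_real, real_inner_smul_right,
    norm_smul, mul_pow, Real.norm_eq_abs, sq_abs, real_inner_comm,
    show u - x = -(x - u) by abel, inner_neg_right, norm_neg]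
  ring

end Projection

theorem norm_posPart5_sub_sq_le {M : ℕ} (v lam : EuclideanSpace ℝ (Fin M))
    (hlam : ∀ i, 0 ≤ lam i) : ‖posPart5 v - lam‖ ^ 2 ≤ ‖v - lam‖ ^ 2 := by
  simp only [EuclideanSpace.norm_sq_eq, PiLp.sub_apply, posPart5, Real.norm_eq_abs, sq_abs]
  refine Finset.sum_le_sum fun i _ => ?_
  rcases le_total 0 (v i) with h | h
  · rw [max_eq_left h]
  · rw [max_eq_right h]
    nlinarith [hlam i]

theorem stmt5_general {H : Type*} [NormedAddCommGroup H] [InnerProductSpace ℝ H]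
    [CompleteSpace H] {M : ℕ}
    (X : Set H) (hXconv : Convex ℝ X)
    (P : H → H) (hP : ∀ y : H, P y ∈ X ∧ ∀ w ∈ X, ‖y - P y‖ ≤ ‖y - w‖)
    (L : H × EuclideanSpace ℝ (Fin M) → ℝ)
    (hLconv : ∀ lam, ConvexOn ℝ Set.univ (fun x => L (x, lam)))
    (hLxdiff : ∀ lam, Differentiable ℝ (fun x => L (x, lam)))
    (hLconc : ∀ x, ConcaveOn ℝ Set.univ (fun lam => L (x, lam)))
    (hLlamdiff : ∀ x, Differentiable ℝ (fun lam => L (x, lam)))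
    (u : H) (μ : EuclideanSpace ℝ (Fin M)) (ε : ℝ) (hε : 0 < ε)
    (u' : H) (hu' : u' = P (u - ε • gradient (fun x => L (x, μ)) u))
    (μ' : EuclideanSpace ℝ (Fin M))
    (hμ' : μ' = posPart5 (μ + ε • gradient (fun lam => L (u, lam)) μ)) :
    ∀ x ∈ X, ∀ lam : EuclideanSpace ℝ (Fin M), (∀ i, 0 ≤ lam i) →
      L (u, lam) - L (x, μ) ≤
        (1 / (2 * ε)) * (‖u - x‖ ^ 2 - ‖u' - x‖ ^ 2
            + ‖μ - lam‖ ^ 2 - ‖μ' - lam‖ ^ 2)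
          + (ε / 2) * (‖gradient (fun x => L (x, μ)) u‖ ^ 2
            + ‖gradient (fun lam => L (u, lam)) μ‖ ^ 2) := by
  intro x hx lam hlam
  set g := gradient (fun x => L (x, μ)) u
  set h := gradient (fun lam => L (u, lam)) μ
  have hconv : L (u, μ) + ⟪g, x - u⟫_ℝ ≤ L (x, μ) := by
    simpa only [toDual_apply_apply] using (hLconv μ).add_apply_sub_le_of_hasFDerivAt
      (Set.mem_univ u) (Set.mem_univ x) (hLxdiff μ u).hasGradientAt.hasFDerivAt
  have hconc : L (u, lam) ≤ L (u, μ) + ⟪h, lam - μ⟫_ℝ := by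
    simpa only [toDual_apply_apply] using (hLconc u).le_add_apply_sub_of_hasFDerivAt
      (Set.mem_univ μ) (Set.mem_univ lam) (hLlamdiff u μ).hasGradientAt.hasFDerivAt
  have hprimal : ‖u' - x‖ ^ 2 ≤ ‖u - x‖ ^ 2 + 2 * ε * ⟪g, x - u⟫_ℝ + ε ^ 2 * ‖g‖ ^ 2 :=
    calc ‖u' - x‖ ^ 2 ≤ ‖u - ε • g - x‖ ^ 2 :=
          hu' ▸ hXconv.norm_sub_sq_le_of_isNearest (hP _).1 (hP _).2 hx
      _ = _ := by simpa [sub_eq_add_neg] using norm_add_smul_sub_sq u (-g) x ε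
  have hdual : ‖μ' - lam‖ ^ 2 ≤ ‖μ - lam‖ ^ 2 - 2 * ε * ⟪h, lam - μ⟫_ℝ + ε ^ 2 * ‖h‖ ^ 2 :=
    calc ‖μ' - lam‖ ^ 2 ≤ ‖μ + ε • h - lam‖ ^ 2 := hμ' ▸ norm_posPart5_sub_sq_le _ lam hlam
      _ = _ := norm_add_smul_sub_sq μ h lam ε
  have key : 2 * ε * (L (u, lam) - L (x, μ)) ≤ ‖u - x‖ ^ 2 - ‖u' - x‖ ^ 2
      + ‖μ - lam‖ ^ 2 - ‖μ' - lam‖ ^ 2 + ε ^ 2 * (‖g‖ ^ 2 + ‖h‖ ^ 2) := by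
    linear_combination (2 * ε) * (hconv + hconc) + hprimal + hdual
  field_simp
  linarith

/-- Lemma 2 of the paper: the per-iteration decrement property of one step of the
Arrow–Hurwicz saddle point method applied to a convex-concave function `L`, with a
projected primal gradient descent step and a projected dual gradient ascent step. -/
theorem stmt5 {H : Type*} [NormedAddCommGroup H] [InnerProductSpace ℝ H]
    [CompleteSpace H] {M : ℕ}
    (X : Set H) (hXne : X.Nonempty) (hXcl : IsClosed X) (hXconv : Convex ℝ X)
    (P : H → H) (hP : ∀ y : H, P y ∈ X ∧ ∀ w ∈ X, ‖y - P y‖ ≤ ‖y - w‖)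
    (L : H × EuclideanSpace ℝ (Fin M) → ℝ)
    (hLconv : ∀ lam, ConvexOn ℝ Set.univ (fun x => L (x, lam)))
    (hLxdiff : ∀ lam, Differentiable ℝ (fun x => L (x, lam)))
    (hLconc : ∀ x, ConcaveOn ℝ Set.univ (fun lam => L (x, lam)))
    (hLlamdiff : ∀ x, Differentiable ℝ (fun lam => L (x, lam)))
    (u : H) (μ : EuclideanSpace ℝ (Fin M)) (ε : ℝ) (hε : 0 < ε)
    (u' : H) (hu' : u' = P (u - ε • gradient (fun x => L (x, μ)) u))
    (μ' : EuclideanSpace ℝ (Fin M))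
    (hμ' : μ' = posPart5 (μ + ε • gradient (fun lam => L (u, lam)) μ)) :
    ∀ x ∈ X, ∀ lam : EuclideanSpace ℝ (Fin M), (∀ i, 0 ≤ lam i) →
      L (u, lam) - L (x, μ) ≤
        (1 / (2 * ε)) * (‖u - x‖ ^ 2 - ‖u' - x‖ ^ 2
            + ‖μ - lam‖ ^ 2 - ‖μ' - lam‖ ^ 2)
          + (ε / 2) * (‖gradient (fun x => L (x, μ)) u‖ ^ 2
            + ‖gradient (fun lam => L (u, lam)) μ‖ ^ 2) :=
  stmt5_general X hXconv P hP L hLconv hLxdiff hLconc hLlamdiff u μ ε hε u' hu' μ' hμ'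
end

section
/- In the deterministic saddle point setup below, for every x ∈ X with H(x) ≤ 0 componentwise and every λ ∈ ℝ^M with λ ≥ 0 componentwise: Σ_{t=1}^T (F(x_t) − F(x)) + ⟨λ, Σ_{t=1}^T H(x_t)⟩ − (δεT/2 + 1/(2ε)) ‖λ‖² ≤ (1/(2ε)) ‖x_1 − x‖² + εTK/2. -/
open scoped InnerProductSpace
open Finset

/-! For the regularized Lagrangian `L(y, l) = F y + ⟪l, H y⟫ - (δε/2)‖l‖²`, convexity in `y`,
concavity in `l` and feasibility of `x` bound `F(x_t) - F(x) + ⟪λ, H(x_t)⟫ - (δε/2)‖λ‖²`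
by the two linearizations `⟪∇ₓL, x_t - x⟫ + ⟪∇_λL, λ - λ_t⟫` plus a slack `-(δε/2)‖λ_t‖²`.
Since both projections (onto `X` and onto the nonnegative orthant) do not increase distances to
points of their target sets, each linearization is at most
`(‖y_t - w‖² - ‖y_{t+1} - w‖²)/(2ε) + (ε/2)‖g_t‖²`. By the gradient bounds and
`C₁ + δ²ε² ≤ δ`, the `(ε/2)‖g_t‖²` terms cost at most `εK/2 + (δε/2)‖λ_t‖²`, which the slack
absorbs, and the distance terms telescope when summed over `t`. -/

theorem ConvexOn.add_inner_gradient_le {E : Type*} [NormedAddCommGroup E]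
    [InnerProductSpace ℝ E] [CompleteSpace E] {f : E → ℝ} {s : Set E} (hf : ConvexOn ℝ s f)
    {a b : E} (ha : a ∈ s) (hb : b ∈ s) (hfa : DifferentiableAt ℝ f a) :
    f a + ⟪gradient f a, b - a⟫_ℝ ≤ f b := by
  set g := AffineMap.lineMap (k := ℝ) a b
  have hg : ConvexOn ℝ (g ⁻¹' s) (f ∘ g) := hf.comp_affineMap g
  have hderiv : HasDerivAt (f ∘ g) (fderiv ℝ f a (b - a)) 0 := by
    have : HasFDerivAt f (fderiv ℝ f a) (g 0) := by
      simpa [g] using hfa.hasFDerivAt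
    exact this.comp_hasDerivAt 0 AffineMap.hasDerivAt_lineMap
  have := hg.le_slope_of_hasDerivAt (by simpa [g] using ha) (by simpa [g] using hb)
    zero_lt_one hderiv
  simp only [slope_def_field, Function.comp_apply, g, AffineMap.lineMap_apply_one,
    AffineMap.lineMap_apply_zero, sub_zero, div_one] at this
  rw [inner_gradient_left]
  linarith

section Projection

variable {E : Type*} [NormedAddCommGroup E] [InnerProductSpace ℝ E]

theorem Convex.norm_sub_le_of_forall_norm_sub_le {K : Set E} (hK : Convex ℝ K) {y p w : E}
    (hp : p ∈ K) (hmin : ∀ z ∈ K, ‖y - p‖ ≤ ‖y - z‖) (hw : w ∈ K) :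
    ‖p - w‖ ≤ ‖y - w‖ := by
  have : Nonempty K := ⟨⟨p, hp⟩⟩
  have hinf : ‖y - p‖ = ⨅ z : K, ‖y - z‖ :=
    le_antisymm (le_ciInf fun z => hmin z z.2)
      (ciInf_le ⟨0, Set.forall_mem_range.2 fun _ => norm_nonneg _⟩ (⟨p, hp⟩ : K))
  have hobtuse : ⟪y - p, w - p⟫_ℝ ≤ 0 := (norm_eq_iInf_iff_real_inner_le_zero hK hp).1 hinf w hw
  have hexpand : ‖y - w‖ ^ 2 = ‖y - p‖ ^ 2 - 2 * ⟪y - p, w - p⟫_ℝ + ‖p - w‖ ^ 2 := by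
    rw [show y - w = (y - p) - (w - p) by abel, norm_sub_sq_real, ← norm_neg (w - p), neg_sub]
  nlinarith [norm_nonneg (p - w), norm_nonneg (y - w), sq_nonneg ‖y - p‖]

theorem inner_le_of_norm_sub_le_norm_add_smul_sub {y y' w g : E} {ε : ℝ} (hε : 0 < ε)
    (h : ‖y' - w‖ ≤ ‖y + ε • g - w‖) :
    ⟪g, w - y⟫_ℝ ≤ 1 / (2 * ε) * (‖y - w‖ ^ 2 - ‖y' - w‖ ^ 2) + ε / 2 * ‖g‖ ^ 2 := by
  have hsq : ‖y' - w‖ ^ 2 ≤ ‖y - w‖ ^ 2 - 2 * ε * ⟪g, w - y⟫_ℝ + ε ^ 2 * ‖g‖ ^ 2 := by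
    calc ‖y' - w‖ ^ 2 ≤ ‖y + ε • g - w‖ ^ 2 := by gcongr
      _ = ‖(y - w) + ε • g‖ ^ 2 := by congr 2; abel
      _ = _ := by
        rw [norm_add_sq_real, inner_smul_right, norm_smul, Real.norm_of_nonneg hε.le,
          real_inner_comm, ← neg_sub w y, inner_neg_right]
        ring
  refine le_of_mul_le_mul_left ?_ (by positivity : (0 : ℝ) < 2 * ε)
  have : 2 * ε * (1 / (2 * ε) * (‖y - w‖ ^ 2 - ‖y' - w‖ ^ 2) + ε / 2 * ‖g‖ ^ 2)
      = ‖y - w‖ ^ 2 - ‖y' - w‖ ^ 2 + ε ^ 2 * ‖g‖ ^ 2 := by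
    field_simp
  linarith

theorem Convex.inner_sub_le_of_forall_norm_sub_le {K : Set E} (hK : Convex ℝ K)
    {y p w g : E} {ε : ℝ} (hε : 0 < ε) (hp : p ∈ K)
    (hmin : ∀ z ∈ K, ‖y - ε • g - p‖ ≤ ‖y - ε • g - z‖) (hw : w ∈ K) :
    ⟪g, y - w⟫_ℝ ≤ 1 / (2 * ε) * (‖y - w‖ ^ 2 - ‖p - w‖ ^ 2) + ε / 2 * ‖g‖ ^ 2 := by
  have h : ‖p - w‖ ≤ ‖y + ε • -g - w‖ := by
    rw [smul_neg, ← sub_eq_add_neg]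
    exact hK.norm_sub_le_of_forall_norm_sub_le hp hmin hw
  simpa only [← neg_sub y w, inner_neg_neg, norm_neg] using
    inner_le_of_norm_sub_le_norm_add_smul_sub hε h

end Projection

theorem EuclideanSpace.norm_sub_le_of_eq_max_zero {ι : Type*} [Fintype ι]
    {v c μ : EuclideanSpace ℝ ι} (hμ : ∀ e, 0 ≤ μ e) (hc : ∀ e, c e = max (v e) 0) :
    ‖c - μ‖ ≤ ‖v - μ‖ := by
  rw [EuclideanSpace.norm_eq, EuclideanSpace.norm_eq]
  gcongr with e
  simp only [PiLp.sub_apply, Real.norm_eq_abs, hc e]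
  simpa only [max_eq_left (hμ e)] using abs_max_sub_max_le_abs (v e) (μ e) 0

theorem sum_Icc_le_of_le_add_sub {u a : ℕ → ℝ} {c : ℝ} {T : ℕ}
    (h : ∀ t ∈ Icc 1 T, u t ≤ c + (a t - a (t + 1))) (ha : 0 ≤ a (T + 1)) :
    ∑ t ∈ Icc 1 T, u t ≤ T * c + a 1 := by
  suffices ∑ t ∈ Icc 1 T, u t ≤ T * c + (a 1 - a (T + 1)) by linarith
  clear ha
  induction T with
  | zero => simp
  | succ T ih =>
    rw [sum_Icc_succ_top (by omega), Nat.cast_succ]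
    have := ih fun t ht => h t (by simp at ht ⊢; omega)
    linarith [h (T + 1) (by simp)]

section Lagrangian

variable {E ι : Type*} [Fintype ι]

theorem EuclideanSpace.inner_eq_sum_mul (l v : EuclideanSpace ℝ ι) :
    ⟪l, v⟫_ℝ = ∑ e, l e * v e := by
  simp [PiLp.inner_apply, mul_comm]

theorem convexOn_inner_of_nonneg [AddCommGroup E] [Module ℝ E] {s : Set E} (hs : Convex ℝ s)
    {H : E → EuclideanSpace ℝ ι} (hH : ∀ e, ConvexOn ℝ s fun y => H y e)
    {l : EuclideanSpace ℝ ι} (hl : ∀ e, 0 ≤ l e) : ConvexOn ℝ s fun y => ⟪l, H y⟫_ℝ := by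
  refine ⟨hs, fun x hx y hy a b ha hb hab => ?_⟩
  simp only [EuclideanSpace.inner_eq_sum_mul, smul_eq_mul, mul_sum, ← sum_add_distrib]
  refine sum_le_sum fun e _ => ?_
  have := mul_le_mul_of_nonneg_left ((hH e).2 hx hy ha hb hab) (hl e)
  simp only [smul_eq_mul] at this
  linarith

/-- The paper's `L` is `lagrangian F H (δ * ε)`. -/
noncomputable def lagrangian (F : E → ℝ) (H : E → EuclideanSpace ℝ ι) (κ : ℝ) (y : E)
    (l : EuclideanSpace ℝ ι) : ℝ :=
  F y + ⟪l, H y⟫_ℝ - κ / 2 * ‖l‖ ^ 2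

variable {F : E → ℝ} {H : E → EuclideanSpace ℝ ι} {κ : ℝ}

theorem lagrangian_sub_le_inner (hκ : 0 ≤ κ) (y : E) (l m : EuclideanSpace ℝ ι) :
    lagrangian F H κ y m - lagrangian F H κ y l ≤ ⟪H y - κ • l, m - l⟫_ℝ := by
  have : ⟪H y - κ • l, m - l⟫_ℝ = lagrangian F H κ y m - lagrangian F H κ y l
      + κ / 2 * ‖m - l‖ ^ 2 := by
    simp only [lagrangian, norm_sub_sq_real, inner_sub_left, inner_sub_right, inner_smul_left,
      real_inner_self_eq_norm_sq, real_inner_comm, RCLike.conj_to_real]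
    ring
  rw [this]
  have : 0 ≤ κ / 2 * ‖m - l‖ ^ 2 := by positivity
  linarith

theorem lagrangian_le_of_nonpos {y : E} {l : EuclideanSpace ℝ ι} (hl : ∀ e, 0 ≤ l e)
    (hy : ∀ e, H y e ≤ 0) : lagrangian F H κ y l ≤ F y - κ / 2 * ‖l‖ ^ 2 := by
  have : ⟪l, H y⟫_ℝ ≤ 0 := by
    rw [EuclideanSpace.inner_eq_sum_mul]
    exact sum_nonpos fun e _ => mul_nonpos_of_nonneg_of_nonpos (hl e) (hy e)
  unfold lagrangian
  linarith

variable [NormedAddCommGroup E] [InnerProductSpace ℝ E] [CompleteSpace E]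

theorem lagrangian_gap_le {s : Set E} (hF : ConvexOn ℝ s F)
    (hH : ∀ e, ConvexOn ℝ s fun y => H y e)
    {y z : E} (hy : y ∈ s) (hz : z ∈ s) (hFd : DifferentiableAt ℝ F y)
    (hHd : ∀ e, DifferentiableAt ℝ (fun y => H y e) y) (hHz : ∀ e, H z e ≤ 0) (hκ : 0 ≤ κ)
    {l : EuclideanSpace ℝ ι} (hl : ∀ e, 0 ≤ l e) (m : EuclideanSpace ℝ ι) :
    F y - F z + ⟪m, H y⟫_ℝ ≤ κ / 2 * ‖m‖ ^ 2 - κ / 2 * ‖l‖ ^ 2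
      + ⟪gradient (lagrangian F H κ · l) y, y - z⟫_ℝ + ⟪H y - κ • l, m - l⟫_ℝ := by
  have hconv : ConvexOn ℝ s (lagrangian F H κ · l) :=
    (hF.add (convexOn_inner_of_nonneg hF.1 hH hl)).sub (concaveOn_const _ hF.1)
  have hdiff : DifferentiableAt ℝ (lagrangian F H κ · l) y := by
    have : DifferentiableAt ℝ (fun y => ⟪l, H y⟫_ℝ) y := by
      simp only [EuclideanSpace.inner_eq_sum_mul]
      fun_prop
    unfold lagrangian
    fun_prop
  have hprimal := hconv.add_inner_gradient_le hy hz hdiff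
  have hdual := lagrangian_sub_le_inner (F := F) (H := H) hκ y l m
  have hfeas := lagrangian_le_of_nonpos (F := F) (κ := κ) hl hHz
  rw [← neg_sub y z, inner_neg_right] at hprimal
  unfold lagrangian at hprimal hdual hfeas ⊢
  linarith

end Lagrangian

theorem stmt9_general
    {n M : ℕ} (T : ℕ)
    (X : Set (EuclideanSpace ℝ (Fin n)))
    (hXconv : Convex ℝ X)
    (P : EuclideanSpace ℝ (Fin n) → EuclideanSpace ℝ (Fin n))
    (hP : ∀ y, P y ∈ X ∧ ∀ w ∈ X, ‖y - P y‖ ≤ ‖y - w‖)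
    (F : EuclideanSpace ℝ (Fin n) → ℝ)
    (hFconv : ConvexOn ℝ Set.univ F) (hFdiff : Differentiable ℝ F)
    (Hc : Fin M → EuclideanSpace ℝ (Fin n) → ℝ)
    (hHconv : ∀ e, ConvexOn ℝ Set.univ (Hc e))
    (hHdiff : ∀ e, Differentiable ℝ (Hc e))
    (Hvec : EuclideanSpace ℝ (Fin n) → EuclideanSpace ℝ (Fin M))
    (hHvec : ∀ y e, Hvec y e = Hc e y)
    (ε δ : ℝ) (hε : 0 < ε) (hδ : 0 < δ)
    (x : ℕ → EuclideanSpace ℝ (Fin n)) (lam : ℕ → EuclideanSpace ℝ (Fin M))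
    (hlam1 : lam 1 = 0)
    (gx : ℕ → EuclideanSpace ℝ (Fin n))
    (hgx : ∀ t, gx t =
      gradient (fun y => F y + (∑ e, lam t e * Hc e y) - (δ * ε / 2) * ‖lam t‖ ^ 2) (x t))
    (glam : ℕ → EuclideanSpace ℝ (Fin M))
    (hglam : ∀ t, glam t = Hvec (x t) - (δ * ε) • lam t)
    (hxrec : ∀ t, 1 ≤ t → t ≤ T → x (t + 1) = P (x t - ε • gx t))
    (hlamrec : ∀ t, 1 ≤ t → t ≤ T → ∀ e,
      lam (t + 1) e = max ((lam t + ε • glam t) e) 0)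
    (C₁ C₂ : ℝ)
    (hgxb : ∀ t, 1 ≤ t → t ≤ T → ‖gx t‖ ^ 2 ≤ C₁ * (1 + ‖lam t‖ ^ 2))
    (hglamb : ∀ t, 1 ≤ t → t ≤ T → ‖glam t‖ ^ 2 ≤ C₂ + δ ^ 2 * ε ^ 2 * ‖lam t‖ ^ 2)
    (K : ℝ) (hK : K = C₁ + C₂) (hδK : C₁ + δ ^ 2 * ε ^ 2 ≤ δ)
    :
    ∀ xf ∈ X, (∀ e, Hc e xf ≤ 0) →
      ∀ lamv : EuclideanSpace ℝ (Fin M), (∀ e, 0 ≤ lamv e) →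
        (∑ t ∈ Finset.Icc 1 T, (F (x t) - F xf))
            + ⟪lamv, ∑ t ∈ Finset.Icc 1 T, Hvec (x t)⟫_ℝ
            - (δ * ε * T / 2 + 1 / (2 * ε)) * ‖lamv‖ ^ 2
          ≤ (1 / (2 * ε)) * ‖x 1 - xf‖ ^ 2 + ε * T * K / 2 := by
  intro xf hxf hHxf lamv hlamv
  have hHe : ∀ e, (fun y => Hvec y e) = Hc e := fun e => funext fun y => hHvec y e
  have hgrad : ∀ t, gx t = gradient (lagrangian F Hvec (δ * ε) · (lam t)) (x t) := by
    intro t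
    simp only [hgx t, lagrangian, EuclideanSpace.inner_eq_sum_mul, hHvec]
  have hlam_nonneg : ∀ t ∈ Icc 1 T, ∀ e, 0 ≤ lam t e := by
    rintro (_ | _ | t) ht e
    · simp at ht
    · simp [hlam1]
    · rw [hlamrec (t + 1) (by omega) (by simp at ht; omega)]
      exact le_max_right _ _
  set a : ℕ → ℝ := fun t => 1 / (2 * ε) * (‖x t - xf‖ ^ 2 + ‖lam t - lamv‖ ^ 2)
  have step : ∀ t ∈ Icc 1 T, F (x t) - F xf + ⟪lamv, Hvec (x t)⟫_ℝ
      ≤ (δ * ε / 2 * ‖lamv‖ ^ 2 + ε * K / 2) + (a t - a (t + 1)) := by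
    intro t ht
    obtain ⟨ht1, htT⟩ := mem_Icc.1 ht
    have hgap := lagrangian_gap_le hFconv (fun e => hHe e ▸ hHconv e) (Set.mem_univ (x t))
      (Set.mem_univ xf) (hFdiff _) (fun e => hHe e ▸ hHdiff e _) (fun e => hHvec xf e ▸ hHxf e)
      (κ := δ * ε) (by positivity) (hlam_nonneg t ht) lamv
    rw [← hgrad, ← hglam] at hgap
    have hprimal := hXconv.inner_sub_le_of_forall_norm_sub_le (y := x t) (g := gx t) hε
      (hP _).1 (hP _).2 hxf
    rw [← hxrec t ht1 htT] at hprimal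
    have hdual := inner_le_of_norm_sub_le_norm_add_smul_sub hε
      (EuclideanSpace.norm_sub_le_of_eq_max_zero hlamv (hlamrec t ht1 htT))
    have hnorms : ε / 2 * ‖gx t‖ ^ 2 + ε / 2 * ‖glam t‖ ^ 2
        ≤ ε * K / 2 + δ * ε / 2 * ‖lam t‖ ^ 2 := by
      nlinarith [hgxb t ht1 htT, hglamb t ht1 htT, mul_le_mul_of_nonneg_right hδK
        (sq_nonneg ‖lam t‖)]
    simp only [a]
    linarith
  have hsum := sum_Icc_le_of_le_add_sub step (by positivity)
  simp only [sum_add_distrib, ← inner_sum, a, hlam1, zero_sub, norm_neg] at hsum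
  linarith

/-- The telescoped per-iteration bound (equation (28)) in the proof of Theorem 1
of the paper, for the deterministic saddle point method. -/
theorem stmt9
    {n M : ℕ} (T : ℕ) (hT : 1 ≤ T)
    (X : Set (EuclideanSpace ℝ (Fin n))) (hXne : X.Nonempty)
    (hXcomp : IsCompact X) (hXconv : Convex ℝ X)
    (P : EuclideanSpace ℝ (Fin n) → EuclideanSpace ℝ (Fin n))
    (hP : ∀ y, P y ∈ X ∧ ∀ w ∈ X, ‖y - P y‖ ≤ ‖y - w‖)
    (F : EuclideanSpace ℝ (Fin n) → ℝ)
    (hFconv : ConvexOn ℝ Set.univ F) (hFdiff : Differentiable ℝ F)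
    (Hc : Fin M → EuclideanSpace ℝ (Fin n) → ℝ)
    (hHconv : ∀ e, ConvexOn ℝ Set.univ (Hc e))
    (hHdiff : ∀ e, Differentiable ℝ (Hc e))
    (Hvec : EuclideanSpace ℝ (Fin n) → EuclideanSpace ℝ (Fin M))
    (hHvec : ∀ y e, Hvec y e = Hc e y)
    (ε δ : ℝ) (hε : 0 < ε) (hδ : 0 < δ)
    (x : ℕ → EuclideanSpace ℝ (Fin n)) (lam : ℕ → EuclideanSpace ℝ (Fin M))
    (hx1 : x 1 ∈ X) (hlam1 : lam 1 = 0)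
    (gx : ℕ → EuclideanSpace ℝ (Fin n))
    (hgx : ∀ t, gx t =
      gradient (fun y => F y + (∑ e, lam t e * Hc e y) - (δ * ε / 2) * ‖lam t‖ ^ 2) (x t))
    (glam : ℕ → EuclideanSpace ℝ (Fin M))
    (hglam : ∀ t, glam t = Hvec (x t) - (δ * ε) • lam t)
    (hxrec : ∀ t, 1 ≤ t → t ≤ T → x (t + 1) = P (x t - ε • gx t))
    (hlamrec : ∀ t, 1 ≤ t → t ≤ T → ∀ e,
      lam (t + 1) e = max ((lam t + ε • glam t) e) 0)
    (C₁ C₂ : ℝ) (hC₁ : 0 ≤ C₁) (hC₂ : 0 ≤ C₂)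
    (hgxb : ∀ t, 1 ≤ t → t ≤ T → ‖gx t‖ ^ 2 ≤ C₁ * (1 + ‖lam t‖ ^ 2))
    (hglamb : ∀ t, 1 ≤ t → t ≤ T → ‖glam t‖ ^ 2 ≤ C₂ + δ ^ 2 * ε ^ 2 * ‖lam t‖ ^ 2)
    (K : ℝ) (hK : K = C₁ + C₂) (hδK : C₁ + δ ^ 2 * ε ^ 2 ≤ δ)
    :
    ∀ xf ∈ X, (∀ e, Hc e xf ≤ 0) →
      ∀ lamv : EuclideanSpace ℝ (Fin M), (∀ e, 0 ≤ lamv e) →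
        (∑ t ∈ Finset.Icc 1 T, (F (x t) - F xf))
            + ⟪lamv, ∑ t ∈ Finset.Icc 1 T, Hvec (x t)⟫_ℝ
            - (δ * ε * T / 2 + 1 / (2 * ε)) * ‖lamv‖ ^ 2
          ≤ (1 / (2 * ε)) * ‖x 1 - xf‖ ^ 2 + ε * T * K / 2 :=
  stmt9_general T X hXconv P hP F hFconv hFdiff Hc hHconv hHdiff Hvec hHvec ε δ hε hδ x lam hlam1 gx
    hgx glam hglam hxrec hlamrec C₁ C₂ hgxb hglamb K hK hδK
end

section
/- In the deterministic saddle point setup below, with constant step-size ε = 1/√T, let x̄_T = (1/T) Σ_{t=1}^T x_t be the running average of the primal iterates. Then F(x̄_T) − F(x*) ≤ (1/(2√T)) (‖x_1 − x*‖² + K), i.e. the averaged iterate is O(1/√T)-suboptimal in objective value. -/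
/-! The potential `‖x_t - x*‖² + ‖λ_t‖²` drops at every step by at least
`2ε (F(x_t) - F(x*)) - ε² K`. Projection onto `X` and the positive part are non-expansive
towards `x* ∈ X` and towards `0` respectively, which bounds the new potential by the old one
plus the cross terms `-2ε ⟪x_t - x*, ∇ₓL⟫ + 2ε ⟪λ_t, ∇_λL⟫` and `ε²` times the squared
gradients. Convexity of `L(·, λ_t)` and feasibility of `x*` bound the cross terms by
`-2ε (F(x_t) - F(x*)) - 2δε² ‖λ_t‖²`, and thanks to `C₁ + δ²ε² ≤ δ` this regularisation term
absorbs the growth of the gradient bounds in `‖λ_t‖`. Telescoping over `t ≤ T` and Jensen's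
inequality for the average give `F(x̄_T) - F(x*) ≤ ‖x₁ - x*‖² / (2εT) + εK / 2`, which is the
claim for `ε = 1/√T`. -/

open Finset
open scoped InnerProductSpace

theorem convexOn_sum_mul {E ι : Type*} [AddCommGroup E] [Module ℝ E] {s : Set E}
    (hs : Convex ℝ s) (t : Finset ι) {w : ι → ℝ} (hw : ∀ i ∈ t, 0 ≤ w i) {g : ι → E → ℝ}
    (hg : ∀ i ∈ t, ConvexOn ℝ s (g i)) :
    ConvexOn ℝ s (fun y => ∑ i ∈ t, w i * g i y) := by
  have := Finset.sum_induction (fun i y => w i * g i y) (ConvexOn ℝ s)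
    (fun _ _ => ConvexOn.add) (convexOn_const 0 hs) fun i hi => (hg i hi).smul (hw i hi)
  convert this using 1
  ext y
  simp [Finset.sum_apply]

theorem Finset.sum_Icc_le_of_le_sub_add {a A : ℕ → ℝ} {b : ℝ} {T : ℕ}
    (h : ∀ t ∈ Icc 1 T, a t ≤ A t - A (t + 1) + b) (hA : 0 ≤ A (T + 1)) :
    ∑ t ∈ Icc 1 T, a t ≤ A 1 + T * b := by
  calc ∑ t ∈ Icc 1 T, a t ≤ ∑ t ∈ Icc 1 T, (A t - A (t + 1) + b) := sum_le_sum h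
    _ = A 1 - A (T + 1) + T * b := by
      rw [sum_add_distrib, sum_const, Nat.card_Icc, Nat.add_sub_cancel, nsmul_eq_mul,
        ← neg_sub (A (T + 1)), ← Finset.Ico_add_one_right_eq_Icc, ← sum_Ico_sub A (by omega),
        ← sum_neg_distrib]
      simp only [neg_sub]
    _ ≤ A 1 + T * b := by linarith

theorem ConvexOn.map_average_sub_le {E : Type*} [AddCommGroup E] [Module ℝ E] {f : E → ℝ}
    (hf : ConvexOn ℝ Set.univ f) {T : ℕ} (hT : 1 ≤ T) {x : ℕ → E} {z : E} {A : ℕ → ℝ} {b : ℝ}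
    (h : ∀ t ∈ Icc 1 T, f (x t) - f z ≤ A t - A (t + 1) + b) (hA : 0 ≤ A (T + 1)) :
    f ((1 / (T : ℝ)) • ∑ t ∈ Icc 1 T, x t) - f z ≤ A 1 / T + b := by
  have hT0 : (0 : ℝ) < T := by exact_mod_cast hT
  have hcard : #(Icc 1 T) = T := by simp
  have hjensen : f ((1 / (T : ℝ)) • ∑ t ∈ Icc 1 T, x t) ≤ 1 / T * ∑ t ∈ Icc 1 T, f (x t) := by
    rw [smul_sum, mul_sum]
    exact hf.map_sum_le (fun _ _ => by positivity) (by simp [hcard, field])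
      fun _ _ => Set.mem_univ _
  rw [one_div_mul_eq_div, le_div_iff₀' hT0] at hjensen
  have hsum := sum_Icc_le_of_le_sub_add h hA
  rw [sum_sub_distrib, sum_const, hcard, nsmul_eq_mul] at hsum
  rw [div_add' _ _ _ hT0.ne', le_div_iff₀ hT0]
  linarith

theorem abs_max_zero_le (a : ℝ) : |max a 0| ≤ |a| := by
  simpa using abs_max_le_max_abs_abs (a := a) (b := 0)

theorem EuclideanSpace.norm_le_norm_of_abs_le {ι : Type*} [Fintype ι]
    {u v : EuclideanSpace ℝ ι} (h : ∀ i, |u i| ≤ |v i|) : ‖u‖ ≤ ‖v‖ := by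
  rw [EuclideanSpace.norm_eq, EuclideanSpace.norm_eq]
  gcongr with i
  simpa only [Real.norm_eq_abs] using h i

section InnerProductSpace

variable {E : Type*} [NormedAddCommGroup E] [InnerProductSpace ℝ E]

theorem ConvexOn.add_inner_gradient_le_s12 [CompleteSpace E] {f : E → ℝ}
    (hf : ConvexOn ℝ Set.univ f) (hdiff : Differentiable ℝ f) (x y : E) :
    f x + ⟪gradient f x, y - x⟫_ℝ ≤ f y := by
  set φ : ℝ → ℝ := f ∘ AffineMap.lineMap x y
  have hφ : ConvexOn ℝ Set.univ φ := hf.comp_affineMap _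
  have hφ' : HasDerivAt φ (fderiv ℝ f x (y - x)) 0 := by
    simpa using (hdiff _).hasFDerivAt.comp_hasDerivAt (0 : ℝ)
      (AffineMap.hasDerivAt_lineMap (a := x) (b := y))
  have hslope := hφ.le_slope_of_hasDerivAt (Set.mem_univ 0) (Set.mem_univ 1) one_pos hφ'
  have hφ01 : slope φ 0 1 = f y - f x := by simp [slope_def_field, φ]
  rw [hφ01] at hslope
  rw [inner_gradient_left]
  linarith

theorem Convex.norm_sub_le_of_isMinOn_s12 {X : Set E} (hX : Convex ℝ X) {u p w : E} (hp : p ∈ X)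
    (hmin : IsMinOn (‖u - ·‖) X p) (hw : w ∈ X) : ‖p - w‖ ≤ ‖u - w‖ := by
  have hinf : ‖u - p‖ = ⨅ z : X, ‖u - z‖ := by
    have : Nonempty X := ⟨⟨p, hp⟩⟩
    refine le_antisymm (le_ciInf fun z => isMinOn_iff.mp hmin z z.2) ?_
    exact ciInf_le ⟨0, by rintro _ ⟨z, rfl⟩; exact norm_nonneg _⟩ (⟨p, hp⟩ : X)
  have hobtuse : ⟪u - p, w - p⟫_ℝ ≤ 0 :=
    (norm_eq_iInf_iff_real_inner_le_zero hX hp).mp hinf w hw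
  have hexpand := norm_sub_sq_real (u - p) (w - p)
  rw [sub_sub_sub_cancel_right] at hexpand
  rw [norm_sub_rev p w]
  nlinarith [norm_nonneg (w - p), norm_nonneg (u - w), sq_nonneg ‖u - p‖]

theorem norm_sub_smul_sq_real (v g : E) (ε : ℝ) :
    ‖v - ε • g‖ ^ 2 = ‖v‖ ^ 2 - 2 * ε * ⟪v, g⟫_ℝ + ε ^ 2 * ‖g‖ ^ 2 := by
  rw [norm_sub_sq_real, real_inner_smul_right, norm_smul, mul_pow, Real.norm_eq_abs, sq_abs]
  ring

theorem norm_add_smul_sq_real (v g : E) (ε : ℝ) :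
    ‖v + ε • g‖ ^ 2 = ‖v‖ ^ 2 + 2 * ε * ⟪v, g⟫_ℝ + ε ^ 2 * ‖g‖ ^ 2 := by
  rw [norm_add_sq_real, real_inner_smul_right, norm_smul, mul_pow, Real.norm_eq_abs, sq_abs]
  ring

theorem Convex.norm_sub_sq_le_of_projected_step {X : Set E} (hX : Convex ℝ X) {x g p z : E}
    {ε : ℝ} (hp : p ∈ X) (hmin : IsMinOn (‖(x - ε • g) - ·‖) X p) (hz : z ∈ X) :
    ‖p - z‖ ^ 2 ≤ ‖x - z‖ ^ 2 - 2 * ε * ⟪x - z, g⟫_ℝ + ε ^ 2 * ‖g‖ ^ 2 := by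
  rw [← norm_sub_smul_sq_real, sub_right_comm]
  gcongr
  exact hX.norm_sub_le_of_isMinOn_s12 hp hmin hz

end InnerProductSpace

theorem norm_sq_le_of_posPart_step {ι : Type*} [Fintype ι] {lam lam' h : EuclideanSpace ℝ ι}
    {ε : ℝ} (hlam' : ∀ e, lam' e = max ((lam + ε • h) e) 0) :
    ‖lam'‖ ^ 2 ≤ ‖lam‖ ^ 2 + 2 * ε * ⟪lam, h⟫_ℝ + ε ^ 2 * ‖h‖ ^ 2 := by
  rw [← norm_add_smul_sq_real]
  gcongr
  exact EuclideanSpace.norm_le_norm_of_abs_le fun e => hlam' e ▸ abs_max_zero_le _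

section AugmentedLagrangian

variable {E ι : Type*} [Fintype ι]

noncomputable def augLagrangian (F : E → ℝ) (H : ι → E → ℝ) (c : ℝ)
    (lam : EuclideanSpace ℝ ι) (y : E) : ℝ :=
  F y + (∑ e, lam e * H e y) - (c / 2) * ‖lam‖ ^ 2

variable {F : E → ℝ} {H : ι → E → ℝ} {c : ℝ} {lam : EuclideanSpace ℝ ι}

theorem augLagrangian_le_of_feasible {y : E} (hlam : ∀ e, 0 ≤ lam e) (hy : ∀ e, H e y ≤ 0) :
    augLagrangian F H c lam y ≤ F y - (c / 2) * ‖lam‖ ^ 2 := by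
  have : ∑ e, lam e * H e y ≤ 0 :=
    sum_nonpos fun e _ => mul_nonpos_of_nonneg_of_nonpos (hlam e) (hy e)
  unfold augLagrangian
  linarith

variable [NormedAddCommGroup E] [InnerProductSpace ℝ E]

theorem convexOn_augLagrangian (hF : ConvexOn ℝ Set.univ F)
    (hH : ∀ e, ConvexOn ℝ Set.univ (H e)) (hlam : ∀ e, 0 ≤ lam e) :
    ConvexOn ℝ Set.univ (augLagrangian F H c lam) :=
  (hF.add (convexOn_sum_mul convex_univ _ (fun e _ => hlam e) fun e _ => hH e)).sub
    (concaveOn_const _ convex_univ)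

theorem differentiable_augLagrangian (hF : Differentiable ℝ F)
    (hH : ∀ e, Differentiable ℝ (H e)) : Differentiable ℝ (augLagrangian F H c lam) := by
  unfold augLagrangian
  fun_prop

theorem augLagrangian_gap_le_inner_gradients [CompleteSpace E]
    (hF : ConvexOn ℝ Set.univ F) (hFd : Differentiable ℝ F)
    (hH : ∀ e, ConvexOn ℝ Set.univ (H e)) (hHd : ∀ e, Differentiable ℝ (H e))
    {Hv : E → EuclideanSpace ℝ ι} (hHv : ∀ y e, Hv y e = H e y) (hlam : ∀ e, 0 ≤ lam e)
    {x z : E} (hz : ∀ e, H e z ≤ 0) :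
    F x - F z + c * ‖lam‖ ^ 2 ≤
      ⟪x - z, gradient (augLagrangian F H c lam) x⟫_ℝ - ⟪lam, Hv x - c • lam⟫_ℝ := by
  have hgrad := (convexOn_augLagrangian (c := c) hF hH hlam).add_inner_gradient_le_s12
    (differentiable_augLagrangian hFd hHd) x z
  have hz' := augLagrangian_le_of_feasible (c := c) (F := F) hlam hz
  have hx : augLagrangian F H c lam x = F x + ∑ e, lam e * H e x - (c / 2) * ‖lam‖ ^ 2 := rfl
  have hdual : ⟪lam, Hv x - c • lam⟫_ℝ = ∑ e, lam e * H e x - c * ‖lam‖ ^ 2 := by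
    rw [inner_sub_right, real_inner_smul_right, real_inner_self_eq_norm_sq]
    congr 1
    simp [PiLp.inner_apply, hHv, mul_comm]
  rw [hdual, real_inner_comm, ← neg_sub z x, inner_neg_right]
  linarith

theorem primalDual_step_le [CompleteSpace E] {X : Set E} (hX : Convex ℝ X)
    (hF : ConvexOn ℝ Set.univ F) (hFd : Differentiable ℝ F)
    (hH : ∀ e, ConvexOn ℝ Set.univ (H e)) (hHd : ∀ e, Differentiable ℝ (H e))
    {Hv : E → EuclideanSpace ℝ ι} (hHv : ∀ y e, Hv y e = H e y) (hlam : ∀ e, 0 ≤ lam e)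
    {ε : ℝ} (hε : 0 ≤ ε) {x x' z g : E} {lam' h : EuclideanSpace ℝ ι}
    (hg : g = gradient (augLagrangian F H c lam) x) (hh : h = Hv x - c • lam)
    (hx' : x' ∈ X) (hmin : IsMinOn (‖(x - ε • g) - ·‖) X x')
    (hlam' : ∀ e, lam' e = max ((lam + ε • h) e) 0) (hzX : z ∈ X) (hz : ∀ e, H e z ≤ 0) :
    2 * ε * (F x - F z) + 2 * ε * c * ‖lam‖ ^ 2 ≤
      (‖x - z‖ ^ 2 + ‖lam‖ ^ 2) - (‖x' - z‖ ^ 2 + ‖lam'‖ ^ 2) +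
        ε ^ 2 * (‖g‖ ^ 2 + ‖h‖ ^ 2) := by
  have hprimal := hX.norm_sub_sq_le_of_projected_step hx' hmin hzX
  have hdual := norm_sq_le_of_posPart_step hlam'
  have hgap := augLagrangian_gap_le_inner_gradients (c := c) (x := x) hF hFd hH hHd hHv hlam hz
  rw [← hg, ← hh] at hgap
  linarith [mul_le_mul_of_nonneg_left hgap (by positivity : 0 ≤ 2 * ε)]

end AugmentedLagrangian

theorem stmt12_general
    {n M : ℕ} (T : ℕ) (hT : 1 ≤ T)
    (X : Set (EuclideanSpace ℝ (Fin n)))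
    (hXconv : Convex ℝ X)
    (P : EuclideanSpace ℝ (Fin n) → EuclideanSpace ℝ (Fin n))
    (hP : ∀ y, P y ∈ X ∧ ∀ w ∈ X, ‖y - P y‖ ≤ ‖y - w‖)
    (F : EuclideanSpace ℝ (Fin n) → ℝ)
    (hFconv : ConvexOn ℝ Set.univ F) (hFdiff : Differentiable ℝ F)
    (Hc : Fin M → EuclideanSpace ℝ (Fin n) → ℝ)
    (hHconv : ∀ e, ConvexOn ℝ Set.univ (Hc e))
    (hHdiff : ∀ e, Differentiable ℝ (Hc e))
    (Hvec : EuclideanSpace ℝ (Fin n) → EuclideanSpace ℝ (Fin M))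
    (hHvec : ∀ y e, Hvec y e = Hc e y)
    (ε δ : ℝ) (hε : 0 < ε) (hδ : 0 < δ)
    (x : ℕ → EuclideanSpace ℝ (Fin n)) (lam : ℕ → EuclideanSpace ℝ (Fin M))
    (hlam1 : lam 1 = 0)
    (gx : ℕ → EuclideanSpace ℝ (Fin n))
    (hgx : ∀ t, gx t =
      gradient (fun y => F y + (∑ e, lam t e * Hc e y) - (δ * ε / 2) * ‖lam t‖ ^ 2) (x t))
    (glam : ℕ → EuclideanSpace ℝ (Fin M))
    (hglam : ∀ t, glam t = Hvec (x t) - (δ * ε) • lam t)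
    (hxrec : ∀ t, 1 ≤ t → t ≤ T → x (t + 1) = P (x t - ε • gx t))
    (hlamrec : ∀ t, 1 ≤ t → t ≤ T → ∀ e,
      lam (t + 1) e = max ((lam t + ε • glam t) e) 0)
    (C₁ C₂ : ℝ)
    (hgxb : ∀ t, 1 ≤ t → t ≤ T → ‖gx t‖ ^ 2 ≤ C₁ * (1 + ‖lam t‖ ^ 2))
    (hglamb : ∀ t, 1 ≤ t → t ≤ T → ‖glam t‖ ^ 2 ≤ C₂ + δ ^ 2 * ε ^ 2 * ‖lam t‖ ^ 2)
    (K : ℝ) (hK : K = C₁ + C₂) (hδK : C₁ + δ ^ 2 * ε ^ 2 ≤ δ)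
    (hεT : ε = 1 / Real.sqrt T)
    (xstar : EuclideanSpace ℝ (Fin n)) (hxstarX : xstar ∈ X)
    (hxstarfeas : ∀ e, Hc e xstar ≤ 0)
    (xbar : EuclideanSpace ℝ (Fin n))
    (hxbar : xbar = (1 / (T : ℝ)) • ∑ t ∈ Finset.Icc 1 T, x t) :
    F xbar - F xstar ≤
      (1 / (2 * Real.sqrt T)) * (‖x 1 - xstar‖ ^ 2 + K) := by
  have hlam_nonneg : ∀ t ∈ Icc 1 T, ∀ e, 0 ≤ lam t e := by
    rintro (_ | _ | t) ht e
    · simp at ht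
    · simp [hlam1]
    · rw [hlamrec (t + 1) (by omega) (by simp at ht; omega)]
      exact le_max_right _ _
  set A : ℕ → ℝ := fun t => (‖x t - xstar‖ ^ 2 + ‖lam t‖ ^ 2) / (2 * ε)
  have hstep : ∀ t ∈ Icc 1 T, F (x t) - F xstar ≤ A t - A (t + 1) + ε * K / 2 := by
    intro t ht
    obtain ⟨h1, h2⟩ := mem_Icc.mp ht
    have hmin : IsMinOn (‖(x t - ε • gx t) - ·‖) X (x (t + 1)) :=
      hxrec t h1 h2 ▸ isMinOn_iff.mpr (hP _).2
    have hdescent := primalDual_step_le hXconv hFconv hFdiff hHconv hHdiff hHvec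
      (hlam_nonneg t ht) hε.le (hgx t) (hglam t) (hxrec t h1 h2 ▸ (hP _).1) hmin
      (hlamrec t h1 h2) hxstarX hxstarfeas
    have hgrad_bound : ‖gx t‖ ^ 2 + ‖glam t‖ ^ 2 ≤ K + δ * ‖lam t‖ ^ 2 := by
      linarith [hgxb t h1 h2, hglamb t h1 h2, mul_le_mul_of_nonneg_right hδK (sq_nonneg ‖lam t‖)]
    have : 0 ≤ δ * ε ^ 2 * ‖lam t‖ ^ 2 := by positivity
    simp only [A]
    field_simp
    linarith [mul_le_mul_of_nonneg_left hgrad_bound (sq_nonneg ε)]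
  have hsqrt : Real.sqrt T ^ 2 = T := Real.sq_sqrt (Nat.cast_nonneg T)
  calc F xbar - F xstar ≤ A 1 / T + ε * K / 2 :=
        hxbar ▸ hFconv.map_average_sub_le hT hstep (by positivity)
    _ = (1 / (2 * Real.sqrt T)) * (‖x 1 - xstar‖ ^ 2 + K) := by
      simp only [A, hlam1, norm_zero, hεT]
      field_simp
      rw [hsqrt]
      ring

/-- First part of Corollary 1 of the paper: with constant step-size `ε = 1/√T`,
the running average `x̄_T = (1/T) ∑_{t=1}^T x_t` of the primal iterates satisfies
`F(x̄_T) − F(x*) ≤ (1/(2√T))(‖x₁ − x*‖² + K)`, i.e. it is `O(1/√T)`-suboptimal. -/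
theorem stmt12
    {n M : ℕ} (T : ℕ) (hT : 1 ≤ T)
    (X : Set (EuclideanSpace ℝ (Fin n))) (hXne : X.Nonempty)
    (hXcomp : IsCompact X) (hXconv : Convex ℝ X)
    (P : EuclideanSpace ℝ (Fin n) → EuclideanSpace ℝ (Fin n))
    (hP : ∀ y, P y ∈ X ∧ ∀ w ∈ X, ‖y - P y‖ ≤ ‖y - w‖)
    (F : EuclideanSpace ℝ (Fin n) → ℝ)
    (hFconv : ConvexOn ℝ Set.univ F) (hFdiff : Differentiable ℝ F)
    (Hc : Fin M → EuclideanSpace ℝ (Fin n) → ℝ)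
    (hHconv : ∀ e, ConvexOn ℝ Set.univ (Hc e))
    (hHdiff : ∀ e, Differentiable ℝ (Hc e))
    (Hvec : EuclideanSpace ℝ (Fin n) → EuclideanSpace ℝ (Fin M))
    (hHvec : ∀ y e, Hvec y e = Hc e y)
    (ε δ : ℝ) (hε : 0 < ε) (hδ : 0 < δ)
    (x : ℕ → EuclideanSpace ℝ (Fin n)) (lam : ℕ → EuclideanSpace ℝ (Fin M))
    (hx1 : x 1 ∈ X) (hlam1 : lam 1 = 0)
    (gx : ℕ → EuclideanSpace ℝ (Fin n))
    (hgx : ∀ t, gx t =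
      gradient (fun y => F y + (∑ e, lam t e * Hc e y) - (δ * ε / 2) * ‖lam t‖ ^ 2) (x t))
    (glam : ℕ → EuclideanSpace ℝ (Fin M))
    (hglam : ∀ t, glam t = Hvec (x t) - (δ * ε) • lam t)
    (hxrec : ∀ t, 1 ≤ t → t ≤ T → x (t + 1) = P (x t - ε • gx t))
    (hlamrec : ∀ t, 1 ≤ t → t ≤ T → ∀ e,
      lam (t + 1) e = max ((lam t + ε • glam t) e) 0)
    (C₁ C₂ : ℝ) (hC₁ : 0 ≤ C₁) (hC₂ : 0 ≤ C₂)
    (hgxb : ∀ t, 1 ≤ t → t ≤ T → ‖gx t‖ ^ 2 ≤ C₁ * (1 + ‖lam t‖ ^ 2))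
    (hglamb : ∀ t, 1 ≤ t → t ≤ T → ‖glam t‖ ^ 2 ≤ C₂ + δ ^ 2 * ε ^ 2 * ‖lam t‖ ^ 2)
    (K : ℝ) (hK : K = C₁ + C₂) (hδK : C₁ + δ ^ 2 * ε ^ 2 ≤ δ)
    (hεT : ε = 1 / Real.sqrt T)
    (xstar : EuclideanSpace ℝ (Fin n)) (hxstarX : xstar ∈ X)
    (hxstarfeas : ∀ e, Hc e xstar ≤ 0)
    (hxstaropt : ∀ y ∈ X, (∀ e, Hc e y ≤ 0) → F xstar ≤ F y)
    (xbar : EuclideanSpace ℝ (Fin n))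
    (hxbar : xbar = (1 / (T : ℝ)) • ∑ t ∈ Finset.Icc 1 T, x t) :
    F xbar - F xstar ≤
      (1 / (2 * Real.sqrt T)) * (‖x 1 - xstar‖ ^ 2 + K) :=
  stmt12_general T hT X hXconv P hP F hFconv hFdiff Hc hHconv hHdiff Hvec hHvec ε δ hε hδ x lam
    hlam1 gx hgx glam hglam hxrec hlamrec C₁ C₂ hgxb hglamb K hK hδK hεT xstar hxstarX hxstarfeas
    xbar hxbar
end
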